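/- 3-SAT where every clause contains exactly one true literal ('1-in-3-SAT without negated variables') reduces to the following word problem: given finite sets B₁,…,Bₙ of variables from {x₁,…,x_N} and assignments of each variable to one of two tokens a or b, there is a choice selecting for each clause exactly one 'a'-token iff the corresponding instance is 1-in-3 satisfiable. Concretely: for clauses c₁,…,c_m over variables x₁,…,x_N (no negations), there is an assignment σ : {x₁,…,x_N} → {a,b} such that every clause cᵢ = {y_{i,1}, y_{i,2}, y_{i,3}} has exactly one j with σ(y_{i,j}) = a, if and only if for the associated MFA M of the reduction, the word (aab)^N (ab)^m is accepted by M. -/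

import Mathlib

/-- The two tokens a and b. -/
inductive AB where
  | a | b
deriving DecidableEq

/-- The token word contributed by a variable v under assignment σ:
the letter a if σ v is true (the memory of v stores 'a'), nothing otherwise. -/
def tok {N : ℕ} (σ : Fin N → Bool) (v : Fin N) : List AB :=
  if σ v then [AB.a] else []

/-- The word consumed while processing clause j = {y₁, y₂, y₃}: the contents of
the three memories, followed by the letter b. -/
def clauseWord {N m : ℕ} (σ : Fin N → Bool) (c : Fin m → Fin 3 → Fin N)
    (j : Fin m) : List AB :=
  tok σ (c j 0) ++ tok σ (c j 1) ++ tok σ (c j 2) ++ [AB.b]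

/-- The complete word consumed by the automaton of the reduction under the
nondeterministic choice σ: N blocks aab, then the m clause words. -/
def fullWord {N m : ℕ} (σ : Fin N → Bool) (c : Fin m → Fin 3 → Fin N) : List AB :=
  (List.ofFn fun _ : Fin N => [AB.a, AB.a, AB.b]).flatten ++
  (List.ofFn fun j : Fin m => clauseWord σ c j).flatten

/-!
Under the choice σ, clause j consumes `a^k b`, where k is the number of its literals made true
by σ. The clause part of the word is therefore the unary code of the list of these counts, and
unary codes are injective, so it equals `(ab)^m` exactly when every count is 1.
-/

section UnaryCode

variable {α : Type*} {x y : α}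

def unaryCode (x y : α) (L : List ℕ) : List α :=
  (L.map fun k => List.replicate k x ++ [y]).flatten

theorem replicate_append_cons_inj (hxy : x ≠ y) {k k' : ℕ} {s s' : List α}
    (h : List.replicate k x ++ y :: s = List.replicate k' x ++ y :: s') : k = k' ∧ s = s' := by
  induction k generalizing k' with
  | zero =>
    cases k' with
    | zero => simpa using h
    | succ k' => exact absurd (List.cons.inj h).1 hxy.symm
  | succ k ih =>
    cases k' with
    | zero => exact absurd (List.cons.inj h).1 hxy
    | succ k' =>
      obtain ⟨hk, hs⟩ := ih (List.cons.inj h).2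
      exact ⟨congrArg (· + 1) hk, hs⟩

theorem unaryCode_injective (hxy : x ≠ y) : Function.Injective (unaryCode x y) := by
  intro L₁ L₂ h
  induction L₁ generalizing L₂ with
  | nil => cases L₂ <;> simp_all [unaryCode]
  | cons k t ih =>
    cases L₂ with
    | nil => simp [unaryCode] at h
    | cons k' t' =>
      simp only [unaryCode, List.map_cons, List.flatten_cons, List.append_assoc,
        List.singleton_append] at h
      obtain ⟨rfl, ht⟩ := replicate_append_cons_inj hxy h
      rw [ih ht]

end UnaryCode

theorem existsUnique_fin_three_iff_toNat_sum (b : Fin 3 → Bool) :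
    (∃! i, b i = true) ↔ (b 0).toNat + (b 1).toNat + (b 2).toNat = 1 := by
  simp only [ExistsUnique]
  revert b
  decide

theorem clauseWord_eq {N m : ℕ} (σ : Fin N → Bool) (c : Fin m → Fin 3 → Fin N) (j : Fin m) :
    clauseWord σ c j =
      List.replicate ((σ (c j 0)).toNat + (σ (c j 1)).toNat + (σ (c j 2)).toNat) AB.a ++
        [AB.b] := by
  have tok_eq (v : Fin N) : tok σ v = List.replicate (σ v).toNat AB.a := by
    unfold tok; cases σ v <;> rfl
  simp only [clauseWord, tok_eq, List.replicate_add]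

/-- Correctness of the 1-in-3-SAT reduction: the instance (without negated
variables) given by clauses c has an assignment with exactly one true literal
per clause iff some nondeterministic choice σ makes the consumed word equal
(aab)^N (ab)^m, i.e. iff the MFA of the reduction accepts (aab)^N (ab)^m. -/
theorem one_in_three_sat_reduction {N m : ℕ} (c : Fin m → Fin 3 → Fin N) :
    (∃ σ : Fin N → Bool, ∀ j : Fin m, ∃! i : Fin 3, σ (c j i) = true) ↔
    (∃ σ : Fin N → Bool,
        fullWord σ c =
          (List.ofFn fun _ : Fin N => [AB.a, AB.a, AB.b]).flatten ++
          (List.ofFn fun _ : Fin m => [AB.a, AB.b]).flatten) := by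
  refine exists_congr fun σ => ?_
  have clauses_eq : (List.ofFn fun j => clauseWord σ c j).flatten =
      unaryCode AB.a AB.b (List.ofFn fun j =>
        (σ (c j 0)).toNat + (σ (c j 1)).toNat + (σ (c j 2)).toNat) := by
    simp only [unaryCode, List.map_ofFn, Function.comp_def, clauseWord_eq]
  have target_eq : (List.ofFn fun _ : Fin m => [AB.a, AB.b]).flatten =
      unaryCode AB.a AB.b (List.ofFn fun _ : Fin m => 1) := by
    simp [unaryCode]
  rw [fullWord, List.append_right_inj, clauses_eq, target_eq,
    (unaryCode_injective (by decide)).eq_iff, List.ofFn_inj, funext_iff]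
  exact forall_congr' fun j => existsUnique_fin_three_iff_toNat_sum _
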